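/- Let m ≥ 1 be a natural number, let ν : Fin m → ℝ satisfy ν(i) ≥ 1 for all i, and let n and T be real numbers with 2·∑_{i} (ν(i) − 1) + n ≤ T. Then ∑_{i} g( (ν(i) − 1)/2 ) ≤ m · g( (T − n)/(4m) ), where g(x) = (x+1)·log(x+1) − x·log(x). -/

import Mathlib

/-- `g x = (x+1) log(x+1) - x log x`, the von Neumann entropy of a single-mode
thermal state with mean photon number `x` (with the convention `0 * log 0 = 0`,
which holds since `Real.log 0 = 0`). -/
noncomputable def g (x : ℝ) : ℝ := (x + 1) * Real.log (x + 1) - x * Real.log x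

open Real Set

lemma continuous_g : Continuous g := by
  have h1 : Continuous fun x : ℝ => (x + 1) * Real.log (x + 1) :=
    Real.continuous_mul_log.comp (continuous_id.add continuous_const)
  exact h1.sub Real.continuous_mul_log

lemma hasDerivAt_g {x : ℝ} (hx : 0 < x) :
    HasDerivAt g (Real.log (x + 1) - Real.log x) x := by
  have h1 : HasDerivAt (fun y : ℝ => (y + 1) * Real.log (y + 1))
      ((Real.log (x + 1) + 1) * 1) x := by
    exact (Real.hasDerivAt_mul_log (by linarith)).comp x
      ((hasDerivAt_id x).add_const 1)
  have h2 : HasDerivAt (fun y : ℝ => y * Real.log y) (Real.log x + 1) x :=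
    Real.hasDerivAt_mul_log hx.ne'
  have := h1.sub h2
  exact this.congr_deriv (by ring)

lemma deriv_g_eq {x : ℝ} (hx : 0 < x) :
    deriv g x = Real.log (x + 1) - Real.log x :=
  (hasDerivAt_g hx).deriv

lemma deriv2_g_neg {x : ℝ} (hx : 0 < x) : deriv (deriv g) x < 0 := by
  have hev : deriv g =ᶠ[nhds x] fun y => Real.log (y + 1) - Real.log y := by
    filter_upwards [eventually_gt_nhds hx] with y hy using deriv_g_eq hy
  have hd : HasDerivAt (fun y : ℝ => Real.log (y + 1) - Real.log y)
      ((x + 1)⁻¹ - x⁻¹) x := by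
    have h1 : HasDerivAt (fun y : ℝ => Real.log (y + 1)) ((x + 1)⁻¹ * 1) x :=
      (Real.hasDerivAt_log (by linarith)).comp x ((hasDerivAt_id x).add_const 1)
    simpa [Pi.sub_def] using h1.sub (Real.hasDerivAt_log hx.ne')
  rw [hev.deriv_eq, hd.deriv]
  have h1 : (x + 1)⁻¹ < x⁻¹ := by
    apply inv_strictAnti₀ hx; linarith
  linarith

lemma concaveOn_g : ConcaveOn ℝ (Set.Ici (0 : ℝ)) g := by
  refine (strictConcaveOn_of_deriv2_neg (convex_Ici 0)
    continuous_g.continuousOn ?_).concaveOn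
  intro x hx
  simp only [Set.nonempty_Iio, interior_Ici', Set.mem_Ioi] at hx
  simpa [Function.iterate_succ] using deriv2_g_neg hx

lemma monoOn_g : MonotoneOn g (Set.Ici (0 : ℝ)) := by
  refine (strictMonoOn_of_deriv_pos (convex_Ici 0) continuous_g.continuousOn ?_).monotoneOn
  intro x hx
  simp only [Set.nonempty_Iio, interior_Ici', Set.mem_Ioi] at hx
  rw [deriv_g_eq hx]
  have : Real.log x < Real.log (x + 1) := Real.log_lt_log hx (by linarith)
  linarith

/-- Analytic content of the Proposition on Gaussian pure states: if `ν i ≥ 1`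
and `2 ∑ (ν i - 1) + n ≤ T`, then `∑ g((ν i - 1)/2) ≤ m g((T - n)/(4m))`. -/
theorem gaussian_EoF_bound (m : ℕ) (hm : 1 ≤ m) (ν : Fin m → ℝ)
    (hν : ∀ i, 1 ≤ ν i) (n T : ℝ)
    (hT : 2 * (∑ i, (ν i - 1)) + n ≤ T) :
    ∑ i, g ((ν i - 1) / 2) ≤ m * g ((T - n) / (4 * m)) := by
  have hm0 : (0 : ℝ) < m := by exact_mod_cast hm
  -- Jensen's inequality with uniform weights 1/m
  have hmem : ∀ i ∈ Finset.univ, ((ν i - 1) / 2 : ℝ) ∈ Set.Ici (0 : ℝ) := by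
    intro i _; have := hν i; simp only [Set.mem_Ici]; linarith
  have hjensen := concaveOn_g.le_map_sum (t := Finset.univ)
    (w := fun _ : Fin m => (m : ℝ)⁻¹) (p := fun i => (ν i - 1) / 2)
    (fun i _ => by positivity) (by simp [Finset.sum_const]; field_simp) hmem
  -- so ∑ (1/m) g(x_i) ≤ g(∑ (1/m) x_i)
  have hsum : (∑ i, ((m : ℝ)⁻¹ • ((ν i - 1) / 2))) ≤ (T - n) / (4 * m) := by
    simp only [smul_eq_mul, ← Finset.mul_sum]
    have h : ∑ i, (ν i - 1) / 2 = (∑ i, (ν i - 1)) / 2 := by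
      rw [← Finset.sum_div]
    rw [inv_mul_le_iff₀ hm0, h]
    have h2 : ↑m * ((T - n) / (4 * ↑m)) = (T - n) / 4 := by
      field_simp
    rw [h2]
    linarith
  have hsum_mem : (∑ i, ((m : ℝ)⁻¹ • ((ν i - 1) / 2))) ∈ Set.Ici (0 : ℝ) := by
    simp only [Set.mem_Ici, smul_eq_mul]
    apply Finset.sum_nonneg
    intro i _
    exact mul_nonneg (by positivity) (by linarith [hν i])
  have hmono := monoOn_g hsum_mem (by
    simp only [Set.mem_Ici]
    have : (0:ℝ) ≤ ∑ i, ((m : ℝ)⁻¹ • ((ν i - 1) / 2)) := hsum_mem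
    linarith) hsum
  calc ∑ i, g ((ν i - 1) / 2)
      = m * ∑ i, (m : ℝ)⁻¹ • g ((ν i - 1) / 2) := by
        simp only [smul_eq_mul, ← Finset.mul_sum]
        field_simp
    _ ≤ m * g (∑ i, ((m : ℝ)⁻¹ • ((ν i - 1) / 2))) := by
        apply mul_le_mul_of_nonneg_left _ hm0.le
        exact hjensen
    _ ≤ m * g ((T - n) / (4 * m)) := mul_le_mul_of_nonneg_left hmono hm0.le
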